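/- arXiv:math/0503313 — 3 statements merged into one kernel-verified Lean document; each statement's English description precedes it below -/
import Mathlib

section
/- For a closed C² curve γ in the Euclidean plane parametrized by arclength s, with position vector R, unit tangent T, outward normal N, geodesic curvature κ_g, and polar coordinates (ρ, θ), the total length of γ equals the integral over γ of ρ²·κ_g dθ. -/
/-!
Along an arclength-parametrized curve, `d/ds ⟨R, T⟩ = |T|² + ⟨R, T'⟩ = 1 + κ ⟨R, J T⟩`, and
`⟨R, J T⟩ = y x' - x y' = -ρ² θ'`. Since `⟨R, T⟩` is periodic, its derivative integrates to zero
over a period, so `0 = L - ∫ ρ² κ dθ`.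
-/

open Function intervalIntegral

theorem HasDerivAt.fst {𝕜 E F : Type*} [NontriviallyNormedField 𝕜] [NormedAddCommGroup E]
    [NormedSpace 𝕜 E] [NormedAddCommGroup F] [NormedSpace 𝕜 F] {f : 𝕜 → E × F} {f' : E × F}
    {x : 𝕜} (h : HasDerivAt f f' x) : HasDerivAt (fun u => (f u).1) f'.1 x :=
  h.hasFDerivAt.fst

theorem HasDerivAt.snd {𝕜 E F : Type*} [NontriviallyNormedField 𝕜] [NormedAddCommGroup E]
    [NormedSpace 𝕜 E] [NormedAddCommGroup F] [NormedSpace 𝕜 F] {f : 𝕜 → E × F} {f' : E × F}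
    {x : 𝕜} (h : HasDerivAt f f' x) : HasDerivAt (fun u => (f u).2) f'.2 x :=
  h.hasFDerivAt.snd

theorem Function.Periodic.deriv {𝕜 F : Type*} [NontriviallyNormedField 𝕜] [NormedAddCommGroup F]
    [NormedSpace 𝕜 F] {f : 𝕜 → F} {c : 𝕜} (hf : Periodic f c) : Periodic (deriv f) c :=
  fun x => by rw [← deriv_comp_add_const, hf.funext]

theorem Function.Periodic.integral_deriv_eq_zero {E : Type*} [NormedAddCommGroup E]
    [NormedSpace ℝ E] [CompleteSpace E] {f f' : ℝ → E} {c : ℝ} (hf : Periodic f c)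
    (hderiv : ∀ x, HasDerivAt f (f' x) x) (hint : IntervalIntegrable f' MeasureTheory.volume 0 c) :
    ∫ x in (0 : ℝ)..c, f' x = 0 := by
  rw [integral_eq_sub_of_hasDerivAt (fun x _ => hderiv x) hint, ← zero_add c, hf 0, sub_self]

theorem hasDerivAt_position_dot_tangent {γ : ℝ → ℝ × ℝ} {κ : ℝ → ℝ} {s : ℝ}
    (hγ : DifferentiableAt ℝ γ s) (hT : DifferentiableAt ℝ (deriv γ) s)
    (hunit : (deriv γ s).1 ^ 2 + (deriv γ s).2 ^ 2 = 1)
    (hcurv : deriv (deriv γ) s = κ s • (-(deriv γ s).2, (deriv γ s).1)) :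
    HasDerivAt (fun u => (γ u).1 * (deriv γ u).1 + (γ u).2 * (deriv γ u).2)
      (1 - κ s * ((γ s).1 * (deriv γ s).2 - (γ s).2 * (deriv γ s).1)) s := by
  have hR := hγ.hasDerivAt
  have hT' := hT.hasDerivAt
  refine ((hR.fst.mul hT'.fst).add (hR.snd.mul hT'.snd)).congr_deriv ?_
  rw [hcurv]
  simp only [Prod.smul_fst, Prod.smul_snd, smul_eq_mul]
  linear_combination hunit

theorem rho_sq_mul_deriv_angle_eq {γ : ℝ → ℝ × ℝ} {θ : ℝ → ℝ} {s : ℝ} (hγ : DifferentiableAt ℝ γ s)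
    (hθ : ((γ s).1 ^ 2 + (γ s).2 ^ 2) * deriv θ s
        = (γ s).1 * deriv (fun u => (γ u).2) s - (γ s).2 * deriv (fun u => (γ u).1) s) :
    ((γ s).1 ^ 2 + (γ s).2 ^ 2) * deriv θ s
      = (γ s).1 * (deriv γ s).2 - (γ s).2 * (deriv γ s).1 := by
  rwa [hγ.hasDerivAt.fst.deriv, hγ.hasDerivAt.snd.deriv] at hθ

theorem minkowski_polar_formula_euclidean_general
    (L : ℝ) (γ : ℝ → ℝ × ℝ) (κ θ : ℝ → ℝ)
    (hC2 : ContDiff ℝ 2 γ)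
    (hper : ∀ s, γ (s + L) = γ s)
    (hunit : ∀ s, (deriv γ s).1 ^ 2 + (deriv γ s).2 ^ 2 = 1)
    (hcurv : ∀ s, deriv (deriv γ) s = κ s • (-(deriv γ s).2, (deriv γ s).1))
    (hκ : Continuous κ)
    (hθ : ∀ s, ((γ s).1 ^ 2 + (γ s).2 ^ 2) * deriv θ s
        = (γ s).1 * deriv (fun u => (γ u).2) s - (γ s).2 * deriv (fun u => (γ u).1) s) :
    L = ∫ s in (0:ℝ)..L, ((γ s).1 ^ 2 + (γ s).2 ^ 2) * κ s * deriv θ s := by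
  have hγ : Differentiable ℝ γ := hC2.differentiable (by norm_num)
  have hT : Differentiable ℝ (deriv γ) := hC2.differentiable_deriv_two
  have hγc := hγ.continuous
  have hTc := hT.continuous
  set G : ℝ → ℝ := fun s => 1 - κ s * ((γ s).1 * (deriv γ s).2 - (γ s).2 * (deriv γ s).1)
  have hRT_periodic : Periodic (fun u => (γ u).1 * (deriv γ u).1 + (γ u).2 * (deriv γ u).2) L := by
    intro s
    simp only [hper s, (Periodic.deriv hper) s]
  have hGc : Continuous G := by fun_prop
  have hG_integral : ∫ s in (0:ℝ)..L, G s = 0 :=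
    hRT_periodic.integral_deriv_eq_zero
      (fun s => hasDerivAt_position_dot_tangent (hγ s) (hT s) (hunit s) (hcurv s))
      (hGc.intervalIntegrable 0 L)
  have hintegrand :
      (fun s => ((γ s).1 ^ 2 + (γ s).2 ^ 2) * κ s * deriv θ s) = fun s => 1 - G s := by
    funext s
    rw [mul_right_comm, rho_sq_mul_deriv_angle_eq (hγ s) (hθ s)]
    ring
  rw [hintegrand, integral_sub intervalIntegrable_const (hGc.intervalIntegrable 0 L), hG_integral]
  simp

/-- **Polar Minkowski formula in the Euclidean plane** (Theorem 2.1, case `k = 0`).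
For a closed `C²` curve `γ` in `ℝ²` of period `L`, parametrized by arclength,
with signed geodesic curvature `κ` (with respect to the outward normal, so that
`T' = κ • J T` where `J` is rotation by 90° counterclockwise), and polar angle
function `θ` satisfying `ρ² θ' = x y' - y x'`, the total length `L` of the curve
equals `∫ ρ² κ dθ`. -/
theorem minkowski_polar_formula_euclidean
    (L : ℝ) (hL : 0 < L) (γ : ℝ → ℝ × ℝ) (κ θ : ℝ → ℝ)
    (hC2 : ContDiff ℝ 2 γ)
    (hper : ∀ s, γ (s + L) = γ s)
    (hunit : ∀ s, (deriv γ s).1 ^ 2 + (deriv γ s).2 ^ 2 = 1)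
    (hcurv : ∀ s, deriv (deriv γ) s = κ s • (-(deriv γ s).2, (deriv γ s).1))
    (hκ : Continuous κ)
    (hθ : ∀ s, ((γ s).1 ^ 2 + (γ s).2 ^ 2) * deriv θ s
        = (γ s).1 * deriv (fun u => (γ u).2) s - (γ s).2 * deriv (fun u => (γ u).1) s)
    (hθ' : Continuous (deriv θ)) :
    L = ∫ s in (0:ℝ)..L, ((γ s).1 ^ 2 + (γ s).2 ^ 2) * κ s * deriv θ s :=
  minkowski_polar_formula_euclidean_general L γ κ θ hC2 hper hunit hcurv hκ hθ
end

section
/- In the hyperbolic plane of curvature −1, the geodesic curvature of a C² convex curve satisfies κ_g = (cosh r / cosh x) · (dω/ds), where s is hyperbolic arclength along the curve, r is the distance from the origin to the support (tangent) line, x is the distance from the foot of the perpendicular to the point of tangency along that line, and ω is the central angle of the foot of the perpendicular. -/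
open Real

/-! The quantities `cosh r · sin (ω - θ) = sin α` and `cosh r · cos (ω - θ) = cos α cosh ρ`
are polar coordinates of a point with polar angle `ω - θ`, so the polar-angle formula
`R² W' = v u' - u v'` computes `cosh² r (ω' - θ')`, the derivative of `cosh r` cancelling; the rest is
the identity `cosh² r = 1 + sinh² ρ cos² α` together with `cosh ρ = cosh r cosh x`. -/

theorem sq_mul_deriv_polar_angle {R W u v : ℝ → ℝ} {t R' W' u' v' : ℝ}
    (hR : HasDerivAt R R' t) (hW : HasDerivAt W W' t)
    (hu : HasDerivAt u u' t) (hv : HasDerivAt v v' t)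
    (hRu : ∀ s, R s * sin (W s) = u s) (hRv : ∀ s, R s * cos (W s) = v s) :
    R t ^ 2 * W' = v t * u' - u t * v' := by
  have hu' : u' = R' * sin (W t) + R t * (cos (W t) * W') := by
    rw [← funext hRu] at hu
    exact hu.unique (hR.mul hW.sin)
  have hv' : v' = R' * cos (W t) + R t * (-sin (W t) * W') := by
    rw [← funext hRv] at hv
    exact hv.unique (hR.mul hW.cos)
  rw [hu', hv', ← hRu t, ← hRv t]
  linear_combination (-(R t ^ 2 * W')) * sin_sq_add_cos_sq (W t)

theorem cosh_mul_cos_eq_of_cos_eq_tanh_div_tanh {ρ r α W : ℝ} (hρ : ρ ≠ 0)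
    (hsinh : sinh r = sinh ρ * cos α) (hcos : cos W = tanh r / tanh ρ) :
    cosh r * cos W = cos α * cosh ρ := by
  have : sinh ρ ≠ 0 := sinh_ne_zero.mpr hρ
  rw [hcos, tanh_eq_sinh_div_cosh, tanh_eq_sinh_div_cosh, hsinh]
  field_simp [(cosh_pos r).ne']

theorem geodesic_curvature_eq_cosh_ratio_omega_deriv_general
    (ρ θ α r x ω : ℝ → ℝ) (s₀ : ℝ)
    (hρd : Differentiable ℝ ρ) (hθd : Differentiable ℝ θ)
    (hαd : Differentiable ℝ α) (hrd : Differentiable ℝ r)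
    (hωd : Differentiable ℝ ω)
    (hρ : ∀ s, 0 < ρ s)
    (hρ' : ∀ s, deriv ρ s = -Real.sin (α s))
    (hθ' : ∀ s, deriv θ s = Real.cos (α s) / Real.sinh (ρ s))
    (hsinh : ∀ s, Real.sinh (r s) = Real.sinh (ρ s) * Real.cos (α s))
    (hcosh : ∀ s, Real.cosh (ρ s) = Real.cosh (r s) * Real.cosh (x s))
    (hcosω : ∀ s, Real.cos (ω s - θ s) = Real.tanh (r s) / Real.tanh (ρ s))
    (hsinω : ∀ s, Real.sin (ω s - θ s) = Real.sin (α s) / Real.cosh (r s)) :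
    Real.cos (α s₀) * (Real.cosh (ρ s₀) / Real.sinh (ρ s₀)) + deriv α s₀
      = (Real.cosh (r s₀) / Real.cosh (x s₀)) * deriv ω s₀ := by
  have hpolar := sq_mul_deriv_polar_angle (W := fun s => ω s - θ s)
    (v := fun s => cos (α s) * cosh (ρ s))
    (hrd s₀).hasDerivAt.cosh
    ((hωd s₀).hasDerivAt.sub (hθd s₀).hasDerivAt) (hαd s₀).hasDerivAt.sin
    ((hαd s₀).hasDerivAt.cos.mul (hρd s₀).hasDerivAt.cosh)
    (fun s => by rw [hsinω s, mul_div_cancel₀ _ (cosh_pos _).ne'])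
    (fun s => cosh_mul_cos_eq_of_cos_eq_tanh_div_tanh (hρ s).ne' (hsinh s) (hcosω s))
  have hsinhρ : sinh (ρ s₀) ≠ 0 := (sinh_pos_iff.mpr (hρ s₀)).ne'
  have hcoshx : cosh (x s₀) = cosh (ρ s₀) / cosh (r s₀) := by
    rw [hcosh, mul_div_cancel_left₀ _ (cosh_pos _).ne']
  have hcoshr_sq : cosh (r s₀) ^ 2 = sinh (ρ s₀) ^ 2 * cos (α s₀) ^ 2 + 1 := by
    rw [cosh_sq, hsinh]; ring
  rw [hρ', hθ'] at hpolar
  rw [hcoshx]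
  field_simp [(cosh_pos (r s₀)).ne', (cosh_pos (ρ s₀)).ne']
  field_simp at hpolar
  linear_combination -hpolar + cos (α s₀) * cosh_sq (ρ s₀) - cos (α s₀) * hcoshr_sq
    - (sinh (ρ s₀) * (cosh (ρ s₀) * deriv α s₀ + cos (α s₀) * sinh (ρ s₀)))
      * sin_sq_add_cos_sq (α s₀)

/-- Theorem 5.1 specialized to curvature `-1`: the geodesic curvature of a
`C²` strictly convex curve in `ℍ²` satisfies `κ_g = (cosh r / cosh x) dω/ds`.
Here the curve is written in geodesic polar coordinates `(ρ(s), θ(s))` about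
the origin, parametrized by hyperbolic arclength `s`, with `α` the angle from
the radial direction to the outward normal (so `dρ/ds = -sin α`,
`dθ/ds = cos α / sinh ρ`, and the geodesic curvature is
`κ_g = cos α cosh ρ / sinh ρ + dα/ds`); `r` is the distance from the origin to
the tangent line (`sinh r = sinh ρ cos α`), `x` the distance from the foot of
the perpendicular to the point of tangency (`cosh ρ = cosh r cosh x`), and `ω`
the central angle of the foot
(`cos(ω - θ) = tanh r / tanh ρ`, `sin(ω - θ) = sin α / cosh r`). -/
theorem geodesic_curvature_eq_cosh_ratio_omega_deriv
    (ρ θ α r x ω : ℝ → ℝ) (s₀ : ℝ)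
    (hρd : Differentiable ℝ ρ) (hθd : Differentiable ℝ θ)
    (hαd : Differentiable ℝ α) (hrd : Differentiable ℝ r)
    (hxd : Differentiable ℝ x) (hωd : Differentiable ℝ ω)
    (hρ : ∀ s, 0 < ρ s) (hr : ∀ s, 0 < r s) (hx : ∀ s, 0 < x s)
    (hα0 : ∀ s, 0 < α s) (hα1 : ∀ s, α s < π / 2)
    (hang : ∀ s, 0 < ω s - θ s) (hang' : ∀ s, ω s - θ s < π / 2)
    (hρ' : ∀ s, deriv ρ s = -Real.sin (α s))
    (hθ' : ∀ s, deriv θ s = Real.cos (α s) / Real.sinh (ρ s))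
    (hsinh : ∀ s, Real.sinh (r s) = Real.sinh (ρ s) * Real.cos (α s))
    (hcosh : ∀ s, Real.cosh (ρ s) = Real.cosh (r s) * Real.cosh (x s))
    (hcosω : ∀ s, Real.cos (ω s - θ s) = Real.tanh (r s) / Real.tanh (ρ s))
    (hsinω : ∀ s, Real.sin (ω s - θ s) = Real.sin (α s) / Real.cosh (r s)) :
    Real.cos (α s₀) * (Real.cosh (ρ s₀) / Real.sinh (ρ s₀)) + deriv α s₀
      = (Real.cosh (r s₀) / Real.cosh (x s₀)) * deriv ω s₀ :=
  geodesic_curvature_eq_cosh_ratio_omega_deriv_general ρ θ α r x ω s₀ hρd hθd hαd hrd hωd hρ hρ' hθ'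
    hsinh hcosh hcosω hsinω
end

section
/- In the hyperbolic plane of curvature −1, along the boundary of a C² strictly convex body, dφ/dω = 1 − tanh x, where φ is the central angle of the 'right' ideal endpoint of the tangent line, ω the central angle of the foot of the perpendicular from the origin to the tangent line, and x the distance from the foot to the point of tangency. -/
/-!
Since `0 < ω - φ < π/2`, the relation `cos (ω - φ) = tanh r` determines `ω - φ` as the angle of
parallelism `Π(r) = arccos (tanh r)`, so `φ = ω - Π(r(ω))`. The angle of parallelism satisfies
`Π'(r) = -1 / cosh r`, and the chain rule with `r' = -cosh r · tanh x` gives `φ' = 1 - tanh x`.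
-/

open Real

namespace Real

theorem hasDerivAt_tanh (x : ℝ) : HasDerivAt tanh (cosh x ^ 2)⁻¹ x := by
  have h := (hasDerivAt_sinh x).div (hasDerivAt_cosh x) (cosh_pos x).ne'
  rw [show cosh x * cosh x - sinh x * sinh x = 1 by linear_combination cosh_sq_sub_sinh_sq x,
    one_div] at h
  exact h.congr_of_eventuallyEq (.of_forall tanh_eq_sinh_div_cosh)

theorem one_sub_tanh_sq (x : ℝ) : 1 - tanh x ^ 2 = (cosh x ^ 2)⁻¹ := by
  have := (cosh_pos x).ne'
  rw [tanh_eq_sinh_div_cosh]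
  field_simp
  linear_combination cosh_sq_sub_sinh_sq x

theorem sqrt_one_sub_tanh_sq (x : ℝ) : √(1 - tanh x ^ 2) = (cosh x)⁻¹ := by
  rw [one_sub_tanh_sq, ← inv_pow, sqrt_sq (inv_pos.2 (cosh_pos x)).le]

end Real

noncomputable def angleOfParallelism (r : ℝ) : ℝ := arccos (tanh r)

theorem eq_angleOfParallelism_of_cos_eq_tanh {θ r : ℝ} (h₀ : 0 ≤ θ) (hπ : θ ≤ π)
    (h : cos θ = tanh r) : θ = angleOfParallelism r := by
  rw [angleOfParallelism, ← h, arccos_cos h₀ hπ]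

theorem hasDerivAt_angleOfParallelism (r : ℝ) :
    HasDerivAt angleOfParallelism (-(cosh r)⁻¹) r := by
  refine ((hasDerivAt_arccos (neg_one_lt_tanh r).ne' (tanh_lt_one r).ne).comp r
    (hasDerivAt_tanh r)).congr_deriv ?_
  rw [sqrt_one_sub_tanh_sq]
  field_simp [(cosh_pos r).ne']

theorem phi_deriv_eq_one_sub_tanh_general (r x φ : ℝ → ℝ) (ω₀ : ℝ)
    (hrd : Differentiable ℝ r)
    (hang : ∀ ω, 0 < ω - φ ω) (hang' : ∀ ω, ω - φ ω < π / 2)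
    (hpar : ∀ ω, Real.cos (ω - φ ω) = Real.tanh (r ω))
    (hr' : ∀ ω, deriv r ω = -(Real.cosh (r ω) * Real.tanh (x ω))) :
    deriv φ ω₀ = 1 - Real.tanh (x ω₀) := by
  have hφ : φ = fun ω => ω - angleOfParallelism (r ω) := funext fun ω => by
    rw [← eq_angleOfParallelism_of_cos_eq_tanh (hang ω).le (by linarith [hang' ω, pi_pos])
      (hpar ω)]
    ring
  have hderiv : HasDerivAt (fun ω => ω - angleOfParallelism (r ω))
      (1 - -(cosh (r ω₀))⁻¹ * deriv r ω₀) ω₀ := (hasDerivAt_id ω₀).sub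
    ((hasDerivAt_angleOfParallelism (r ω₀)).comp ω₀ (hrd ω₀).hasDerivAt)
  rw [hφ, hderiv.deriv, hr']
  field_simp [(cosh_pos (r ω₀)).ne']

/-- The relation `dφ/dω = 1 - tanh x` of §6 (curvature `-1`): if `φ(ω)` is the
central angle of the "right" ideal endpoint of the tangent line, so that
`ω - φ` is the angle of parallelism for the distance `r(ω)` to the tangent
line, i.e. `cos(ω - φ) = tanh r` with `0 < ω - φ < π/2`, and `r` satisfies
`dr/dω = -cosh r · tanh x` (the Lemma of §5), then `dφ/dω = 1 - tanh x`. -/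
theorem phi_deriv_eq_one_sub_tanh (r x φ : ℝ → ℝ) (ω₀ : ℝ)
    (hrd : Differentiable ℝ r) (hφd : Differentiable ℝ φ)
    (hr : ∀ ω, 0 < r ω)
    (hang : ∀ ω, 0 < ω - φ ω) (hang' : ∀ ω, ω - φ ω < π / 2)
    (hpar : ∀ ω, Real.cos (ω - φ ω) = Real.tanh (r ω))
    (hr' : ∀ ω, deriv r ω = -(Real.cosh (r ω) * Real.tanh (x ω))) :
    deriv φ ω₀ = 1 - Real.tanh (x ω₀) :=
  phi_deriv_eq_one_sub_tanh_general r x φ ω₀ hrd hang hang' hpar hr'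
end
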